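/- Let q ∈ [0, α−β₂). There exists a constant C > 0, depending only on d, α, q, β₁, β₂, C₁, C₂, such that for all 0 < r ≤ R < ∞ and all y ∈ U(r), one has ∫_{{z ∈ ℝ^d_+ : z_d > R/2}} Φ(|z|²/(y_d z_d)) z_d^q |z|^{−d−α} dz + ∫_0^R ∫_{{z̃ ∈ ℝ^{d−1} : |z̃| > R/2}} Φ(|z|²/(y_d z_d)) z_d^q |z|^{−d−α} dz̃ dz_d ≤ C Φ(r/y_d) R^{q−α+β₂} r^{−β₂}. -/

import Mathlib

open MeasureTheory

/-- The Euclidean norm on `ℝ^{m} × ℝ`, viewed as `ℝ^{m+1}`. -/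
noncomputable def nrm {m : ℕ} (x : EuclideanSpace ℝ (Fin m) × ℝ) : ℝ :=
  Real.sqrt (‖x.1‖ ^ 2 + x.2 ^ 2)

set_option maxHeartbeats 1000000

open Set Real Metric ENNReal

section Aux

variable {m : ℕ}

lemma nrm_nonneg (z : EuclideanSpace ℝ (Fin m) × ℝ) : 0 ≤ nrm z := Real.sqrt_nonneg _

lemma snd_le_nrm (z : EuclideanSpace ℝ (Fin m) × ℝ) : z.2 ≤ nrm z := by
  have : z.2 ≤ |z.2| := le_abs_self _
  refine this.trans ?_
  rw [← Real.sqrt_sq_eq_abs]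
  exact Real.sqrt_le_sqrt (by nlinarith [sq_nonneg ‖z.1‖])

lemma fst_le_nrm (z : EuclideanSpace ℝ (Fin m) × ℝ) : ‖z.1‖ ≤ nrm z := by
  have : ‖z.1‖ = Real.sqrt (‖z.1‖ ^ 2) := by
    rw [Real.sqrt_sq (norm_nonneg _)]
  rw [this]
  exact Real.sqrt_le_sqrt (by nlinarith [sq_nonneg z.2])

@[fun_prop] lemma continuous_nrm : Continuous (nrm (m := m)) := by
  unfold nrm
  fun_prop

@[fun_prop] lemma measurable_nrm : Measurable (nrm (m := m)) := continuous_nrm.measurable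

lemma nrm_rpow (z : EuclideanSpace ℝ (Fin m) × ℝ) (c : ℝ) :
    nrm z ^ c = (‖z.1‖ ^ 2 + z.2 ^ 2) ^ (c / 2) := by
  have h0 : (0:ℝ) ≤ ‖z.1‖ ^ 2 + z.2 ^ 2 := by positivity
  rw [nrm, Real.sqrt_eq_rpow, ← Real.rpow_mul h0]
  ring_nf

/-- Scaling of a Lebesgue integral on Euclidean space under dilation. -/
lemma lintegral_scale (g : EuclideanSpace ℝ (Fin m) → ℝ≥0∞) (hg : Measurable g)
    {t : ℝ} (ht : 0 < t) :
    ∫⁻ x, g x = ENNReal.ofReal (t ^ m) * ∫⁻ x, g (t • x) := by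
  have h1 : ∫⁻ x, g (t • x) = ∫⁻ y, g y ∂(Measure.map (t • ·) volume) :=
    (lintegral_map hg (measurable_const_smul t)).symm
  rw [h1, MeasureTheory.Measure.map_addHaar_smul volume (ne_of_gt ht),
    lintegral_smul_measure, finrank_euclideanSpace_fin]
  have htm : (0:ℝ) < t ^ m := by positivity
  rw [abs_of_pos (by positivity), smul_eq_mul, ← mul_assoc, ← ENNReal.ofReal_mul htm.le,
    mul_inv_cancel₀ htm.ne', ENNReal.ofReal_one, one_mul]

end Aux
section Aux2
variable {m : ℕ}

/-- Finiteness of the Japanese-bracket type integral. -/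
lemma J_lt_top {p : ℝ} (hpm : ((m : ℕ) : ℝ) < p) :
    ∫⁻ x : EuclideanSpace ℝ (Fin m), ENNReal.ofReal ((1 + ‖x‖ ^ 2) ^ (-p / 2)) < ⊤ := by
  have hp0 : 0 < p := lt_of_le_of_lt (Nat.cast_nonneg m) hpm
  have hb : ∀ x : EuclideanSpace ℝ (Fin m),
      (1 + ‖x‖ ^ 2) ^ (-p / 2) ≤ (2 : ℝ) ^ (p / 2) * (1 + ‖x‖) ^ (-p) := fun x =>
    rpow_neg_one_add_norm_sq_le x hp0
  calc ∫⁻ x : EuclideanSpace ℝ (Fin m), ENNReal.ofReal ((1 + ‖x‖ ^ 2) ^ (-p / 2))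
      ≤ ∫⁻ x : EuclideanSpace ℝ (Fin m),
          ENNReal.ofReal ((2 : ℝ) ^ (p / 2) * (1 + ‖x‖) ^ (-p)) :=
        lintegral_mono fun x => ENNReal.ofReal_le_ofReal (hb x)
    _ = ENNReal.ofReal ((2 : ℝ) ^ (p / 2)) *
          ∫⁻ x : EuclideanSpace ℝ (Fin m), ENNReal.ofReal ((1 + ‖x‖) ^ (-p)) := by
        simp_rw [ENNReal.ofReal_mul (by positivity : (0:ℝ) ≤ (2 : ℝ) ^ (p / 2))]
        rw [lintegral_const_mul' _ _ ENNReal.ofReal_ne_top]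
    _ < ⊤ := by
        apply ENNReal.mul_lt_top ENNReal.ofReal_lt_top
        have := finite_integral_one_add_norm
          (μ := (volume : Measure (EuclideanSpace ℝ (Fin m)))) (r := p) ?_
        · exact this
        · rwa [finrank_euclideanSpace_fin]

end Aux2

section Aux3
variable {m : ℕ}

lemma I_eq {p : ℝ} (hp0 : 0 < p) {b : ℝ} (hb : 0 < b)
    (hscale : ∀ (g : EuclideanSpace ℝ (Fin m) → ℝ≥0∞), Measurable g →
      ∫⁻ x, g x = ENNReal.ofReal (b ^ m) * ∫⁻ x, g (b • x)) :
    ∫⁻ x : EuclideanSpace ℝ (Fin m), ENNReal.ofReal ((‖x‖ ^ 2 + b ^ 2) ^ (-p / 2))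
      = ENNReal.ofReal (b ^ ((m : ℝ) - p)) *
        ∫⁻ x : EuclideanSpace ℝ (Fin m), ENNReal.ofReal ((1 + ‖x‖ ^ 2) ^ (-p / 2)) := by
  have hg : Measurable fun x : EuclideanSpace ℝ (Fin m) =>
      ENNReal.ofReal ((‖x‖ ^ 2 + b ^ 2) ^ (-p / 2)) := by fun_prop
  rw [hscale _ hg]
  have hpt : ∀ x : EuclideanSpace ℝ (Fin m),
      (‖b • x‖ ^ 2 + b ^ 2) ^ (-p / 2) = b ^ (-p) * (1 + ‖x‖ ^ 2) ^ (-p / 2) := by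
    intro x
    have h1 : ‖b • x‖ ^ 2 + b ^ 2 = b ^ 2 * (1 + ‖x‖ ^ 2) := by
      rw [norm_smul, Real.norm_eq_abs, abs_of_pos hb]; ring
    rw [h1, Real.mul_rpow (by positivity) (by positivity)]
    congr 1
    rw [← Real.rpow_natCast b 2, ← Real.rpow_mul hb.le]
    ring_nf
  simp_rw [hpt, ENNReal.ofReal_mul (by positivity : (0:ℝ) ≤ b ^ (-p)),
    lintegral_const_mul' _ _ ENNReal.ofReal_ne_top, ← mul_assoc,
    ← ENNReal.ofReal_mul (by positivity : (0:ℝ) ≤ b ^ m)]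
  congr 2
  rw [← Real.rpow_natCast b m, ← Real.rpow_add hb, sub_eq_add_neg]

lemma lint_Ioi {e a : ℝ} (he : e < -1) (ha : 0 < a) :
    ∫⁻ t in Set.Ioi a, ENNReal.ofReal (t ^ e) = ENNReal.ofReal (a ^ (e + 1) / (-(e + 1))) := by
  have hnn : 0 ≤ᵐ[volume.restrict (Set.Ioi a)] fun t : ℝ => t ^ e := by
    filter_upwards [ae_restrict_mem measurableSet_Ioi] with t ht
    exact Real.rpow_nonneg (le_of_lt (ha.trans ht)) e
  rw [← ofReal_integral_eq_lintegral_ofReal (integrableOn_Ioi_rpow_of_lt he ha) hnn,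
    integral_Ioi_rpow_of_lt he ha]
  rw [neg_div, div_neg]

lemma lint_Ioo {e R : ℝ} (he : -1 < e) (hR : 0 < R) :
    ∫⁻ t in Set.Ioo 0 R, ENNReal.ofReal (t ^ e) = ENNReal.ofReal (R ^ (e + 1) / (e + 1)) := by
  rw [setLIntegral_congr Ioo_ae_eq_Ioc]
  have hInt : IntegrableOn (fun t : ℝ => t ^ e) (Set.Ioc 0 R) := by
    have h := intervalIntegral.intervalIntegrable_rpow' (a := 0) (b := R) he
    rwa [intervalIntegrable_iff_integrableOn_Ioc_of_le hR.le] at h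
  have hnn : 0 ≤ᵐ[volume.restrict (Set.Ioc 0 R)] fun t : ℝ => t ^ e := by
    filter_upwards [ae_restrict_mem measurableSet_Ioc] with t ht
    exact Real.rpow_nonneg ht.1.le e
  rw [← ofReal_integral_eq_lintegral_ofReal hInt hnn]
  congr 1
  rw [← intervalIntegral.integral_of_le hR.le, integral_rpow (Or.inl he),
    Real.zero_rpow (by linarith : e + 1 ≠ 0), sub_zero]

end Aux3

lemma phi_bound {β₁ β₂ C₁ C₂ : ℝ} {Φ : ℝ → ℝ}
    (hβ0 : 0 ≤ β₁) (hβ : β₁ ≤ β₂)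
    (hC₁ : 0 < C₁)
    (hΦpos : ∀ t : ℝ, 0 ≤ t → 0 < Φ t)
    (hΦflat : ∀ t : ℝ, 0 ≤ t → t < 2 → Φ t = Φ 2)
    (hΦscale : ∀ r R : ℝ, 2 ≤ r → r < R →
      C₁ * (R / r) ^ β₁ ≤ Φ R / Φ r ∧ Φ R / Φ r ≤ C₂ * (R / r) ^ β₂)
    {T s₀ : ℝ} (hs₀ : 2 < s₀) (hT : s₀ ≤ 2 * T) :
    Φ T ≤ (max C₂ (max C₁⁻¹ 1) * 2 ^ β₂) * (Φ s₀ * (T / s₀) ^ β₂) := by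
  have hβ₂0 : 0 ≤ β₂ := hβ0.trans hβ
  have hT0 : 0 < T := by linarith
  have hs₀0 : 0 < s₀ := by linarith
  have hΦs₀ : 0 < Φ s₀ := hΦpos _ hs₀0.le
  set M : ℝ := max C₂ (max C₁⁻¹ 1) with hM
  have hM1 : 1 ≤ M := le_max_of_le_right (le_max_right _ _)
  have hM0 : 0 < M := lt_of_lt_of_le one_pos hM1
  -- first: Φ T ≤ M * Φ s₀ * (T / s₀)^β₂ ∨ (T ≤ s₀ ∧ Φ T ≤ M * Φ s₀)
  have main : Φ T ≤ M * (Φ s₀ * (T / s₀) ^ β₂) ∨ Φ T ≤ M * Φ s₀ := by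
    rcases lt_trichotomy s₀ T with h | h | h
    · left
      have hsc := (hΦscale s₀ T hs₀.le h).2
      have hΦT : Φ T ≤ C₂ * (T / s₀) ^ β₂ * Φ s₀ := by
        rw [div_le_iff₀ hΦs₀] at hsc
        linarith
      calc Φ T ≤ C₂ * (T / s₀) ^ β₂ * Φ s₀ := hΦT
        _ = C₂ * ((T / s₀) ^ β₂ * Φ s₀) := by ring
        _ ≤ M * ((T / s₀) ^ β₂ * Φ s₀) := by
            have hC₂M : C₂ ≤ M := le_max_left _ _
            have hpow : (0:ℝ) ≤ (T / s₀) ^ β₂ := Real.rpow_nonneg (by positivity) _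
            exact mul_le_mul_of_nonneg_right hC₂M (mul_nonneg hpow hΦs₀.le)
        _ = M * (Φ s₀ * (T / s₀) ^ β₂) := by ring
    · right
      rw [h]
      have := hΦpos T hT0.le
      rw [← h]
      nlinarith
    · right
      have hMC : C₁⁻¹ ≤ M := le_max_of_le_right (le_max_left _ _)
      rcases lt_or_ge T 2 with h2 | h2
      · -- T < 2 : Φ T = Φ 2
        rw [hΦflat T hT0.le h2]
        have hsc := (hΦscale 2 s₀ le_rfl hs₀).1
        have hpow : (1:ℝ) ≤ (s₀ / 2) ^ β₁ := by
          have h1 : (1:ℝ) ≤ s₀ / 2 := by linarith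
          calc (1:ℝ) = 1 ^ β₁ := (Real.one_rpow _).symm
            _ ≤ (s₀ / 2) ^ β₁ := Real.rpow_le_rpow zero_le_one h1 hβ0
        have hΦ2 : 0 < Φ 2 := hΦpos 2 (by norm_num)
        have h3 : C₁ ≤ Φ s₀ / Φ 2 := by nlinarith
        have h4 : Φ 2 ≤ C₁⁻¹ * Φ s₀ := by
          rw [le_div_iff₀ hΦ2] at h3
          calc Φ 2 = C₁⁻¹ * (C₁ * Φ 2) := by field_simp
            _ ≤ C₁⁻¹ * Φ s₀ := by
                apply mul_le_mul_of_nonneg_left _ (by positivity)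
                exact h3
        calc Φ 2 ≤ C₁⁻¹ * Φ s₀ := h4
          _ ≤ M * Φ s₀ := mul_le_mul_of_nonneg_right hMC hΦs₀.le
      · -- 2 ≤ T < s₀
        have hsc := (hΦscale T s₀ h2 h).1
        have hpow : (1:ℝ) ≤ (s₀ / T) ^ β₁ := by
          have h1 : (1:ℝ) ≤ s₀ / T := by rw [le_div_iff₀ hT0]; linarith
          calc (1:ℝ) = 1 ^ β₁ := (Real.one_rpow _).symm
            _ ≤ (s₀ / T) ^ β₁ := Real.rpow_le_rpow zero_le_one h1 hβ0
        have hΦT : 0 < Φ T := hΦpos _ hT0.le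
        have h3 : C₁ ≤ Φ s₀ / Φ T := by nlinarith
        rw [le_div_iff₀ hΦT] at h3
        have h4 : Φ T ≤ C₁⁻¹ * Φ s₀ := by
          calc Φ T = C₁⁻¹ * (C₁ * Φ T) := by field_simp
            _ ≤ C₁⁻¹ * Φ s₀ := mul_le_mul_of_nonneg_left h3 (by positivity)
        calc Φ T ≤ C₁⁻¹ * Φ s₀ := h4
          _ ≤ M * Φ s₀ := mul_le_mul_of_nonneg_right hMC hΦs₀.le
  have h2pow : (1:ℝ) ≤ 2 ^ β₂ := by
    calc (1:ℝ) = 1 ^ β₂ := (Real.one_rpow _).symm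
      _ ≤ 2 ^ β₂ := Real.rpow_le_rpow zero_le_one one_le_two hβ₂0
  rcases main with h | h
  · calc Φ T ≤ M * (Φ s₀ * (T / s₀) ^ β₂) := h
      _ = M * 1 * (Φ s₀ * (T / s₀) ^ β₂) := by ring
      _ ≤ M * 2 ^ β₂ * (Φ s₀ * (T / s₀) ^ β₂) := by
          have hX : (0:ℝ) ≤ Φ s₀ * (T / s₀) ^ β₂ :=
            mul_nonneg hΦs₀.le (Real.rpow_nonneg (by positivity) _)
          exact mul_le_mul_of_nonneg_right (mul_le_mul_of_nonneg_left h2pow hM0.le) hX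
  · -- Φ T ≤ M Φ s₀ ≤ M 2^β₂ (T/s₀)^β₂ Φ s₀ since (2T/s₀) ≥ 1
    have h1 : (1:ℝ) ≤ 2 ^ β₂ * (T / s₀) ^ β₂ := by
      rw [← Real.mul_rpow (by norm_num) (by positivity)]
      have : (1:ℝ) ≤ 2 * (T / s₀) := by
        rw [show (2:ℝ) * (T / s₀) = 2 * T / s₀ by ring, le_div_iff₀ hs₀0]
        linarith
      calc (1:ℝ) = 1 ^ β₂ := (Real.one_rpow _).symm
        _ ≤ (2 * (T / s₀)) ^ β₂ := Real.rpow_le_rpow zero_le_one this hβ₂0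
    calc Φ T ≤ M * Φ s₀ := h
      _ ≤ M * Φ s₀ * (2 ^ β₂ * (T / s₀) ^ β₂) :=
          le_mul_of_one_le_right (mul_nonneg hM0.le hΦs₀.le) h1
      _ = M * 2 ^ β₂ * (Φ s₀ * (T / s₀) ^ β₂) := by ring

lemma key_bound {n : ℕ} {α β₁ β₂ C₁ C₂ q : ℝ} {Φ : ℝ → ℝ}
    (hβ0 : 0 ≤ β₁) (hβ : β₁ ≤ β₂) (hC₁ : 0 < C₁)
    (hΦpos : ∀ t : ℝ, 0 ≤ t → 0 < Φ t)
    (hΦflat : ∀ t : ℝ, 0 ≤ t → t < 2 → Φ t = Φ 2)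
    (hΦscale : ∀ r R : ℝ, 2 ≤ r → r < R →
      C₁ * (R / r) ^ β₁ ≤ Φ R / Φ r ∧ Φ R / Φ r ≤ C₂ * (R / r) ^ β₂)
    {r R yd : ℝ} (hr : 0 < r) (hrR : r ≤ R) (hyd : 0 < yd) (hyd2 : yd < r / 2)
    {p : ℝ} (hp : p = (n : ℝ) + 2 + α - 2 * β₂)
    (z : EuclideanSpace ℝ (Fin (n + 1)) × ℝ) (hz2 : 0 < z.2) (hzN : R / 2 < nrm z) :
    Φ (nrm z ^ 2 / (yd * z.2)) * z.2 ^ q * nrm z ^ (-(n + 2 : ℝ) - α)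
      ≤ (max C₂ (max C₁⁻¹ 1) * 2 ^ β₂ * Φ (r / yd) * r ^ (-β₂)) *
        (z.2 ^ (q - β₂) * nrm z ^ (-p)) := by
  have hβ₂0 : 0 ≤ β₂ := hβ0.trans hβ
  have hR0 : 0 < R := lt_of_lt_of_le hr hrR
  have hN0 : 0 < nrm z := (half_pos hR0).trans hzN
  have hNt : z.2 ≤ nrm z := snd_le_nrm z
  have hs₀ : 2 < r / yd := by rw [lt_div_iff₀ hyd]; linarith
  have hTs : r / yd ≤ 2 * (nrm z ^ 2 / (yd * z.2)) := by
    rw [show 2 * (nrm z ^ 2 / (yd * z.2)) = 2 * nrm z ^ 2 / (yd * z.2) by ring,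
      div_le_div_iff₀ hyd (by positivity)]
    nlinarith [mul_le_mul (show r ≤ 2 * nrm z by linarith) hNt hz2.le
      (by positivity : (0:ℝ) ≤ 2 * nrm z)]
  have hΦT := phi_bound hβ0 hβ hC₁ hΦpos hΦflat hΦscale hs₀ hTs
  have htq : (0:ℝ) ≤ z.2 ^ q := Real.rpow_nonneg hz2.le q
  have hNa : (0:ℝ) ≤ nrm z ^ (-(n + 2 : ℝ) - α) := Real.rpow_nonneg hN0.le _
  have step1 : Φ (nrm z ^ 2 / (yd * z.2)) * z.2 ^ q * nrm z ^ (-(n + 2 : ℝ) - α)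
      ≤ (max C₂ (max C₁⁻¹ 1) * 2 ^ β₂ *
          (Φ (r / yd) * (nrm z ^ 2 / (yd * z.2) / (r / yd)) ^ β₂)) *
          z.2 ^ q * nrm z ^ (-(n + 2 : ℝ) - α) := by
    exact mul_le_mul_of_nonneg_right (mul_le_mul_of_nonneg_right hΦT htq) hNa
  refine step1.trans (le_of_eq ?_)
  have hTdiv : nrm z ^ 2 / (yd * z.2) / (r / yd) = nrm z ^ 2 / (z.2 * r) := by
    field_simp
  have hpow : (nrm z ^ 2 / (z.2 * r)) ^ β₂ = nrm z ^ (2 * β₂) / (z.2 ^ β₂ * r ^ β₂) := by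
    rw [Real.div_rpow (by positivity) (by positivity), Real.mul_rpow hz2.le hr.le,
      ← Real.rpow_natCast (nrm z) 2, ← Real.rpow_mul hN0.le]
    norm_num
  have e1 : nrm z ^ (-(n + 2 : ℝ) - α) * nrm z ^ (2 * β₂) = nrm z ^ (-p) := by
    rw [← Real.rpow_add hN0]
    congr 1
    rw [hp]; ring
  have e2 : z.2 ^ q / z.2 ^ β₂ = z.2 ^ (q - β₂) := (Real.rpow_sub hz2 q β₂).symm
  have e3 : r ^ (-β₂) = (r ^ β₂)⁻¹ := Real.rpow_neg hr.le β₂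
  have htb : z.2 ^ β₂ ≠ 0 := by positivity
  have hrb : r ^ β₂ ≠ 0 := by positivity
  rw [hTdiv, hpow, e3, ← e1, ← e2]
  field_simp


/-- For `q ∈ [0, α−β₂)` there is `C > 0` such that for all `0 < r ≤ R` and
`y ∈ U(r)`, the two tail integrals are bounded by `C Φ(r/y_d) R^{q−α+β₂} r^{−β₂}`.
Here `d = n + 2 ≥ 2` and `U(r) = {y : |ỹ| < r/2, 0 < y_d < r/2}`. -/
theorem tail_integral_estimate
    (n : ℕ) (α β₁ β₂ C₁ C₂ q : ℝ) (Φ : ℝ → ℝ)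
    (hα : 0 < α) (hα2 : α < 2)
    (hβ0 : 0 ≤ β₁) (hβ : β₁ ≤ β₂) (hβ₂ : β₂ < min 1 α)
    (hC₁ : 0 < C₁) (hC₂ : 0 < C₂)
    (hΦmeas : Measurable Φ)
    (hΦpos : ∀ t : ℝ, 0 ≤ t → 0 < Φ t)
    (hΦflat : ∀ t : ℝ, 0 ≤ t → t < 2 → Φ t = Φ 2)
    (hΦscale : ∀ r R : ℝ, 2 ≤ r → r < R →
      C₁ * (R / r) ^ β₁ ≤ Φ R / Φ r ∧ Φ R / Φ r ≤ C₂ * (R / r) ^ β₂)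
    (hq0 : 0 ≤ q) (hq : q < α - β₂) :
    ∃ C : ℝ, 0 < C ∧ ∀ r R : ℝ, 0 < r → r ≤ R →
      ∀ y : EuclideanSpace ℝ (Fin (n + 1)) × ℝ,
        ‖y.1‖ < r / 2 → 0 < y.2 → y.2 < r / 2 →
      (∫ z in {z : EuclideanSpace ℝ (Fin (n + 1)) × ℝ | 0 < z.2 ∧ R / 2 < z.2},
          Φ (nrm z ^ 2 / (y.2 * z.2)) * z.2 ^ q * nrm z ^ (-(n + 2 : ℝ) - α)) +
      (∫ z in {z : EuclideanSpace ℝ (Fin (n + 1)) × ℝ | 0 < z.2 ∧ z.2 < R ∧ R / 2 < ‖z.1‖},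
          Φ (nrm z ^ 2 / (y.2 * z.2)) * z.2 ^ q * nrm z ^ (-(n + 2 : ℝ) - α))
      ≤ C * Φ (r / y.2) * (R ^ (q - α + β₂) / r ^ β₂) := by
  have hβ₂0 : 0 ≤ β₂ := hβ0.trans hβ
  have hβ₂1 : β₂ < 1 := lt_of_lt_of_le hβ₂ (min_le_left _ _)
  have hβ₂α : β₂ < α := lt_of_lt_of_le hβ₂ (min_le_right _ _)
  have hn0 : (0:ℝ) ≤ (n : ℝ) := Nat.cast_nonneg n
  set p : ℝ := (n : ℝ) + 2 + α - 2 * β₂ with hp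
  have hpm : ((n + 1 : ℕ) : ℝ) < p := by rw [hp]; push_cast; linarith
  have hp0 : 0 < p := by rw [hp]; linarith
  set J := ∫⁻ x : EuclideanSpace ℝ (Fin (n + 1)),
      ENNReal.ofReal ((1 + ‖x‖ ^ 2) ^ (-p / 2)) with hJdef
  have hJtop : J < ⊤ := J_lt_top hpm
  set cJ : ℝ := J.toReal with hcJdef
  have hcJ0 : 0 ≤ cJ := ENNReal.toReal_nonneg
  have hJeq : J = ENNReal.ofReal cJ := (ENNReal.ofReal_toReal hJtop.ne).symm
  have hmax1 : (1:ℝ) ≤ max C₂ (max C₁⁻¹ 1) := le_max_of_le_right (le_max_right _ _)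
  set M2 : ℝ := max C₂ (max C₁⁻¹ 1) * 2 ^ β₂ with hM2def
  have hM20 : 0 < M2 :=
    mul_pos (lt_of_lt_of_le one_pos hmax1) (Real.rpow_pos_of_pos two_pos _)
  set e₁ : ℝ := (q - β₂) + (((n + 1 : ℕ) : ℝ) - p) with he₁def
  have he₁lt : e₁ < -1 := by rw [he₁def, hp]; push_cast; linarith
  have hq' : (-1:ℝ) < q - β₂ := by linarith
  have hq'1 : (0:ℝ) < q - β₂ + 1 := by linarith
  set c1 : ℝ := (1/2 : ℝ) ^ (e₁ + 1) / (-(e₁ + 1)) with hc1def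
  set c2 : ℝ := (2:ℝ) ^ (p / 2) * (1/2 : ℝ) ^ (((n + 1 : ℕ) : ℝ) - p) / (q - β₂ + 1)
    with hc2def
  have hc10 : 0 < c1 :=
    div_pos (Real.rpow_pos_of_pos (by norm_num) _) (by linarith)
  have hc20 : 0 < c2 :=
    div_pos (mul_pos (Real.rpow_pos_of_pos two_pos _) (Real.rpow_pos_of_pos (by norm_num) _))
      hq'1
  have hCnn : 0 ≤ M2 * cJ * (c1 + c2) :=
    mul_nonneg (mul_nonneg hM20.le hcJ0) (by linarith)
  refine ⟨M2 * cJ * (c1 + c2) + 1, by linarith, ?_⟩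
  intro r R hr hrR y hy1 hy2 hy3
  have hR0 : 0 < R := lt_of_lt_of_le hr hrR
  have hR2 : 0 < R / 2 := half_pos hR0
  have hΦs₀ : 0 < Φ (r / y.2) := hΦpos _ (by positivity)
  set K : ℝ := M2 * Φ (r / y.2) * r ^ (-β₂) with hKdef
  have hK0 : 0 < K := mul_pos (mul_pos hM20 hΦs₀) (Real.rpow_pos_of_pos hr _)
  have hexp : e₁ + 1 = q - α + β₂ := by rw [he₁def, hp]; push_cast; ring
  have hrneg : r ^ (-β₂) = (r ^ β₂)⁻¹ := Real.rpow_neg hr.le β₂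
  -- positivity of the integrand on the relevant sets
  have hfpos : ∀ z : EuclideanSpace ℝ (Fin (n + 1)) × ℝ, 0 < z.2 →
      0 ≤ Φ (nrm z ^ 2 / (y.2 * z.2)) * z.2 ^ q * nrm z ^ (-(n + 2 : ℝ) - α) := by
    intro z hz2
    have harg : 0 ≤ nrm z ^ 2 / (y.2 * z.2) :=
      div_nonneg (by positivity) (mul_nonneg hy2.le hz2.le)
    exact mul_nonneg (mul_nonneg (hΦpos _ harg).le (Real.rpow_nonneg hz2.le q))
      (Real.rpow_nonneg (nrm_nonneg z) _)
  have hfm : Measurable (fun z : EuclideanSpace ℝ (Fin (n + 1)) × ℝ =>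
      Φ (nrm z ^ 2 / (y.2 * z.2)) * z.2 ^ q * nrm z ^ (-(n + 2 : ℝ) - α)) := by fun_prop
  -- the key pointwise bound, interface to `key_bound`
  have hkey : ∀ z : EuclideanSpace ℝ (Fin (n + 1)) × ℝ, 0 < z.2 → R / 2 < nrm z →
      Φ (nrm z ^ 2 / (y.2 * z.2)) * z.2 ^ q * nrm z ^ (-(n + 2 : ℝ) - α)
        ≤ K * (z.2 ^ (q - β₂) * nrm z ^ (-p)) := by
    intro z hz2 hzN
    exact key_bound hβ0 hβ hC₁ hΦpos hΦflat hΦscale hr hrR hy2 hy3 hp z hz2 hzN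
  ----------------------------------------------------------------
  -- Term 1
  ----------------------------------------------------------------
  have hS1 : {z : EuclideanSpace ℝ (Fin (n + 1)) × ℝ | 0 < z.2 ∧ R / 2 < z.2}
      = (Set.univ : Set (EuclideanSpace ℝ (Fin (n + 1)))) ×ˢ Set.Ioi (R / 2) := by
    ext z
    simp only [Set.mem_setOf_eq, Set.mem_prod, Set.mem_univ, Set.mem_Ioi, true_and]
    exact ⟨fun h => h.2, fun h => ⟨hR2.trans h, h⟩⟩
  have hS1meas : MeasurableSet
      {z : EuclideanSpace ℝ (Fin (n + 1)) × ℝ | 0 < z.2 ∧ R / 2 < z.2} := by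
    rw [hS1]; exact MeasurableSet.univ.prod measurableSet_Ioi
  have hG1m : Measurable (fun z : EuclideanSpace ℝ (Fin (n + 1)) × ℝ =>
      ENNReal.ofReal K * (ENNReal.ofReal (z.2 ^ (q - β₂)) *
        ENNReal.ofReal ((‖z.1‖ ^ 2 + z.2 ^ 2) ^ (-p / 2)))) := by fun_prop
  have hterm1 : (∫ z in {z : EuclideanSpace ℝ (Fin (n + 1)) × ℝ | 0 < z.2 ∧ R / 2 < z.2},
      Φ (nrm z ^ 2 / (y.2 * z.2)) * z.2 ^ q * nrm z ^ (-(n + 2 : ℝ) - α))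
      ≤ K * cJ * (c1 * R ^ (e₁ + 1)) := by
    have hBnn : 0 ≤ K * cJ * (c1 * R ^ (e₁ + 1)) :=
      mul_nonneg (mul_nonneg hK0.le hcJ0)
        (mul_nonneg hc10.le (Real.rpow_nonneg hR0.le _))
    rw [integral_eq_lintegral_of_nonneg_ae
      ((ae_restrict_iff' hS1meas).2 (Filter.Eventually.of_forall fun z hz => hfpos z hz.1))
      hfm.aestronglyMeasurable]
    refine ENNReal.toReal_le_of_le_ofReal hBnn ?_
    have hL1 : ∫⁻ z in (Set.univ : Set (EuclideanSpace ℝ (Fin (n + 1)))) ×ˢ Set.Ioi (R / 2),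
        ENNReal.ofReal
          (Φ (nrm z ^ 2 / (y.2 * z.2)) * z.2 ^ q * nrm z ^ (-(n + 2 : ℝ) - α))
        ≤ ENNReal.ofReal (K * cJ * (c1 * R ^ (e₁ + 1))) := by
      have hbound1 : ∀ z ∈ (Set.univ : Set (EuclideanSpace ℝ (Fin (n + 1)))) ×ˢ
          Set.Ioi (R / 2),
          ENNReal.ofReal
            (Φ (nrm z ^ 2 / (y.2 * z.2)) * z.2 ^ q * nrm z ^ (-(n + 2 : ℝ) - α))
          ≤ ENNReal.ofReal K * (ENNReal.ofReal (z.2 ^ (q - β₂)) *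
              ENNReal.ofReal ((‖z.1‖ ^ 2 + z.2 ^ 2) ^ (-p / 2))) := by
        rintro z ⟨-, hz⟩
        have hz2 : 0 < z.2 := hR2.trans hz
        have hzN : R / 2 < nrm z := lt_of_lt_of_le hz (snd_le_nrm z)
        refine le_trans (ENNReal.ofReal_le_ofReal (hkey z hz2 hzN)) (le_of_eq ?_)
        rw [show nrm z ^ (-p) = (‖z.1‖ ^ 2 + z.2 ^ 2) ^ (-p / 2) from nrm_rpow z (-p),
          ENNReal.ofReal_mul hK0.le,
          ENNReal.ofReal_mul (Real.rpow_nonneg hz2.le _)]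
      calc ∫⁻ z in (Set.univ : Set (EuclideanSpace ℝ (Fin (n + 1)))) ×ˢ Set.Ioi (R / 2),
          ENNReal.ofReal
            (Φ (nrm z ^ 2 / (y.2 * z.2)) * z.2 ^ q * nrm z ^ (-(n + 2 : ℝ) - α))
          ≤ ∫⁻ z in (Set.univ : Set (EuclideanSpace ℝ (Fin (n + 1)))) ×ˢ Set.Ioi (R / 2),
            ENNReal.ofReal K * (ENNReal.ofReal (z.2 ^ (q - β₂)) *
              ENNReal.ofReal ((‖z.1‖ ^ 2 + z.2 ^ 2) ^ (-p / 2))) :=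
            setLIntegral_mono hG1m hbound1
        _ = ∫⁻ t in Set.Ioi (R / 2), ∫⁻ x : EuclideanSpace ℝ (Fin (n + 1)),
            ENNReal.ofReal K * (ENNReal.ofReal (t ^ (q - β₂)) *
              ENNReal.ofReal ((‖x‖ ^ 2 + t ^ 2) ^ (-p / 2))) := by
            rw [Measure.volume_eq_prod, ← Measure.prod_restrict, Measure.restrict_univ,
              lintegral_prod_symm _ hG1m.aemeasurable]
        _ = ∫⁻ t in Set.Ioi (R / 2), ENNReal.ofReal (K * cJ * t ^ e₁) := by
            refine setLIntegral_congr_fun measurableSet_Ioi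
              (fun t ht => ?_)
            have ht0 : (0:ℝ) < t := hR2.trans ht
            rw [lintegral_const_mul' _ _ ENNReal.ofReal_ne_top,
              lintegral_const_mul' _ _ ENNReal.ofReal_ne_top,
              I_eq hp0 ht0 (fun g hg => lintegral_scale g hg ht0), ← hJdef, hJeq,
              ← ENNReal.ofReal_mul (Real.rpow_nonneg ht0.le _),
              ← ENNReal.ofReal_mul (Real.rpow_nonneg ht0.le _),
              ← ENNReal.ofReal_mul hK0.le]
            congr 1
            have hmerge : t ^ (q - β₂) * t ^ (((n + 1 : ℕ) : ℝ) - p) = t ^ e₁ :=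
              (Real.rpow_add ht0 _ _).symm
            rw [← hmerge]; ring
        _ = ENNReal.ofReal (K * cJ) * ∫⁻ t in Set.Ioi (R / 2), ENNReal.ofReal (t ^ e₁) := by
            simp_rw [ENNReal.ofReal_mul (mul_nonneg hK0.le hcJ0)]
            rw [lintegral_const_mul' _ _ ENNReal.ofReal_ne_top]
        _ = ENNReal.ofReal (K * cJ) *
            ENNReal.ofReal ((R / 2) ^ (e₁ + 1) / (-(e₁ + 1))) := by
            rw [lint_Ioi he₁lt hR2]
        _ = ENNReal.ofReal (K * cJ * (c1 * R ^ (e₁ + 1))) := by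
            rw [← ENNReal.ofReal_mul (mul_nonneg hK0.le hcJ0)]
            congr 1
            rw [show R / 2 = R * (1/2) by ring,
              Real.mul_rpow hR0.le (by norm_num), hc1def]
            ring
    rw [hS1]
    exact hL1
  ----------------------------------------------------------------
  -- Term 2
  ----------------------------------------------------------------
  have hS2 : {z : EuclideanSpace ℝ (Fin (n + 1)) × ℝ | 0 < z.2 ∧ z.2 < R ∧ R / 2 < ‖z.1‖}
      = {x : EuclideanSpace ℝ (Fin (n + 1)) | R / 2 < ‖x‖} ×ˢ Set.Ioo 0 R := by
    ext z
    simp only [Set.mem_setOf_eq, Set.mem_prod, Set.mem_Ioo]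
    tauto
  have hS2meas : MeasurableSet
      {z : EuclideanSpace ℝ (Fin (n + 1)) × ℝ | 0 < z.2 ∧ z.2 < R ∧ R / 2 < ‖z.1‖} := by
    rw [hS2]
    exact (measurableSet_lt measurable_const measurable_norm).prod measurableSet_Ioo
  have hG2m : Measurable (fun z : EuclideanSpace ℝ (Fin (n + 1)) × ℝ =>
      (ENNReal.ofReal (K * 2 ^ (p / 2)) *
        ENNReal.ofReal ((‖z.1‖ ^ 2 + (R / 2) ^ 2) ^ (-p / 2))) *
        ENNReal.ofReal (z.2 ^ (q - β₂))) := by fun_prop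
  have hterm2 : (∫ z in {z : EuclideanSpace ℝ (Fin (n + 1)) × ℝ |
        0 < z.2 ∧ z.2 < R ∧ R / 2 < ‖z.1‖},
      Φ (nrm z ^ 2 / (y.2 * z.2)) * z.2 ^ q * nrm z ^ (-(n + 2 : ℝ) - α))
      ≤ K * cJ * (c2 * R ^ (e₁ + 1)) := by
    have hBnn : 0 ≤ K * cJ * (c2 * R ^ (e₁ + 1)) :=
      mul_nonneg (mul_nonneg hK0.le hcJ0)
        (mul_nonneg hc20.le (Real.rpow_nonneg hR0.le _))
    rw [integral_eq_lintegral_of_nonneg_ae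
      ((ae_restrict_iff' hS2meas).2 (Filter.Eventually.of_forall fun z hz => hfpos z hz.1))
      hfm.aestronglyMeasurable]
    refine ENNReal.toReal_le_of_le_ofReal hBnn ?_
    have hbound2 : ∀ z ∈ {x : EuclideanSpace ℝ (Fin (n + 1)) | R / 2 < ‖x‖} ×ˢ Set.Ioo 0 R,
        ENNReal.ofReal
          (Φ (nrm z ^ 2 / (y.2 * z.2)) * z.2 ^ q * nrm z ^ (-(n + 2 : ℝ) - α))
        ≤ (ENNReal.ofReal (K * 2 ^ (p / 2)) *
            ENNReal.ofReal ((‖z.1‖ ^ 2 + (R / 2) ^ 2) ^ (-p / 2))) *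
            ENNReal.ofReal (z.2 ^ (q - β₂)) := by
      rintro z ⟨hz1, hz2, -⟩
      have hx0 : (0:ℝ) < ‖z.1‖ := hR2.trans hz1
      have hzN : R / 2 < nrm z := lt_of_lt_of_le hz1 (fst_le_nrm z)
      have hN0 : 0 < nrm z := hR2.trans hzN
      have hNx : nrm z ^ (-p) ≤ ‖z.1‖ ^ (-p) :=
        Real.antitoneOn_rpow_Ioi_of_exponent_nonpos (neg_nonpos.mpr hp0.le)
          (Set.mem_Ioi.2 hx0) (Set.mem_Ioi.2 hN0) (fst_le_nrm z)
      have hxb : ‖z.1‖ ^ (-p) ≤ 2 ^ (p / 2) * (‖z.1‖ ^ 2 + (R / 2) ^ 2) ^ (-p / 2) := by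
        have hle : ‖z.1‖ ^ 2 + (R / 2) ^ 2 ≤ 2 * ‖z.1‖ ^ 2 := by
          have hsq : (R / 2) ^ 2 ≤ ‖z.1‖ ^ 2 := by
            apply pow_le_pow_left₀ hR2.le hz1.le
          linarith
        have hanti : (2 * ‖z.1‖ ^ 2) ^ (-p / 2)
            ≤ (‖z.1‖ ^ 2 + (R / 2) ^ 2) ^ (-p / 2) :=
          Real.antitoneOn_rpow_Ioi_of_exponent_nonpos
            (by rw [neg_div]; exact neg_nonpos.mpr (by positivity))
            (Set.mem_Ioi.2 (by positivity)) (Set.mem_Ioi.2 (by positivity)) hle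
        have hsplit : (2 * ‖z.1‖ ^ 2) ^ (-p / 2) = 2 ^ (-p / 2) * ‖z.1‖ ^ (-p) := by
          rw [Real.mul_rpow (by norm_num) (by positivity),
            ← Real.rpow_natCast ‖z.1‖ 2, ← Real.rpow_mul (norm_nonneg _)]
          congr 1
          push_cast; ring
        have h2cancel : (2:ℝ) ^ (p / 2) * 2 ^ (-p / 2) = 1 := by
          rw [← Real.rpow_add two_pos, show p / 2 + -p / 2 = 0 by ring, Real.rpow_zero]
        calc ‖z.1‖ ^ (-p) = 2 ^ (p / 2) * (2 ^ (-p / 2) * ‖z.1‖ ^ (-p)) := by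
              rw [← mul_assoc, h2cancel, one_mul]
          _ = 2 ^ (p / 2) * (2 * ‖z.1‖ ^ 2) ^ (-p / 2) := by rw [hsplit]
          _ ≤ 2 ^ (p / 2) * (‖z.1‖ ^ 2 + (R / 2) ^ 2) ^ (-p / 2) := by
              exact mul_le_mul_of_nonneg_left hanti (by positivity)
      refine le_trans (ENNReal.ofReal_le_ofReal (hkey z hz2 hzN)) ?_
      have hstep : K * (z.2 ^ (q - β₂) * nrm z ^ (-p))
          ≤ (K * 2 ^ (p / 2) * ((‖z.1‖ ^ 2 + (R / 2) ^ 2) ^ (-p / 2))) * z.2 ^ (q - β₂) := by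
        have htq : (0:ℝ) ≤ z.2 ^ (q - β₂) := Real.rpow_nonneg hz2.le _
        have h5 := mul_le_mul_of_nonneg_left (hNx.trans hxb) (mul_nonneg hK0.le htq)
        calc K * (z.2 ^ (q - β₂) * nrm z ^ (-p))
            = K * z.2 ^ (q - β₂) * nrm z ^ (-p) := by ring
          _ ≤ K * z.2 ^ (q - β₂) *
              (2 ^ (p / 2) * (‖z.1‖ ^ 2 + (R / 2) ^ 2) ^ (-p / 2)) := h5
          _ = (K * 2 ^ (p / 2) * ((‖z.1‖ ^ 2 + (R / 2) ^ 2) ^ (-p / 2))) *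
              z.2 ^ (q - β₂) := by ring
      refine le_trans (ENNReal.ofReal_le_ofReal hstep) (le_of_eq ?_)
      rw [ENNReal.ofReal_mul (by positivity),
        ENNReal.ofReal_mul (mul_nonneg hK0.le (by positivity))]
    have hL2 : ∫⁻ z in {x : EuclideanSpace ℝ (Fin (n + 1)) | R / 2 < ‖x‖} ×ˢ Set.Ioo 0 R,
        ENNReal.ofReal
          (Φ (nrm z ^ 2 / (y.2 * z.2)) * z.2 ^ q * nrm z ^ (-(n + 2 : ℝ) - α))
        ≤ ENNReal.ofReal (K * cJ * (c2 * R ^ (e₁ + 1))) := by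
      calc ∫⁻ z in {x : EuclideanSpace ℝ (Fin (n + 1)) | R / 2 < ‖x‖} ×ˢ Set.Ioo 0 R,
          ENNReal.ofReal
            (Φ (nrm z ^ 2 / (y.2 * z.2)) * z.2 ^ q * nrm z ^ (-(n + 2 : ℝ) - α))
          ≤ ∫⁻ z in {x : EuclideanSpace ℝ (Fin (n + 1)) | R / 2 < ‖x‖} ×ˢ Set.Ioo 0 R,
            (ENNReal.ofReal (K * 2 ^ (p / 2)) *
              ENNReal.ofReal ((‖z.1‖ ^ 2 + (R / 2) ^ 2) ^ (-p / 2))) *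
              ENNReal.ofReal (z.2 ^ (q - β₂)) :=
            setLIntegral_mono hG2m hbound2
        _ = (∫⁻ x in {x : EuclideanSpace ℝ (Fin (n + 1)) | R / 2 < ‖x‖},
              ENNReal.ofReal (K * 2 ^ (p / 2)) *
                ENNReal.ofReal ((‖x‖ ^ 2 + (R / 2) ^ 2) ^ (-p / 2))) *
            ∫⁻ t in Set.Ioo (0:ℝ) R, ENNReal.ofReal (t ^ (q - β₂)) := by
            rw [Measure.volume_eq_prod, ← Measure.prod_restrict]
            refine lintegral_prod_mul
              (μ := volume.restrict {x : EuclideanSpace ℝ (Fin (n + 1)) | R / 2 < ‖x‖})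
              (ν := volume.restrict (Set.Ioo (0:ℝ) R))
              (f := fun x => ENNReal.ofReal (K * 2 ^ (p / 2)) *
                ENNReal.ofReal ((‖x‖ ^ 2 + (R / 2) ^ 2) ^ (-p / 2)))
              (g := fun t => ENNReal.ofReal (t ^ (q - β₂))) ?_ ?_
            · fun_prop
            · fun_prop
        _ ≤ (∫⁻ x : EuclideanSpace ℝ (Fin (n + 1)),
              ENNReal.ofReal (K * 2 ^ (p / 2)) *
                ENNReal.ofReal ((‖x‖ ^ 2 + (R / 2) ^ 2) ^ (-p / 2))) *
            ∫⁻ t in Set.Ioo (0:ℝ) R, ENNReal.ofReal (t ^ (q - β₂)) :=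
            mul_le_mul_left (setLIntegral_le_lintegral _ _) _
        _ = ENNReal.ofReal (K * cJ * (c2 * R ^ (e₁ + 1))) := by
            rw [lintegral_const_mul' _ _ ENNReal.ofReal_ne_top,
              I_eq hp0 hR2 (fun g hg => lintegral_scale g hg hR2), ← hJdef, hJeq,
              lint_Ioo hq' hR0,
              ← ENNReal.ofReal_mul (Real.rpow_nonneg hR2.le _),
              ← ENNReal.ofReal_mul (mul_nonneg hK0.le (by positivity)),
              ← ENNReal.ofReal_mul
                (by positivity :
                  (0:ℝ) ≤ K * 2 ^ (p / 2) * ((R / 2) ^ (((n + 1 : ℕ) : ℝ) - p) * cJ))]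
            congr 1
            have hRsplit : (R / 2) ^ (((n + 1 : ℕ) : ℝ) - p)
                = R ^ (((n + 1 : ℕ) : ℝ) - p) * (1/2 : ℝ) ^ (((n + 1 : ℕ) : ℝ) - p) := by
              rw [show R / 2 = R * (1/2) by ring, Real.mul_rpow hR0.le (by norm_num)]
            have hRadd : R ^ (((n + 1 : ℕ) : ℝ) - p) * R ^ (q - β₂ + 1) = R ^ (e₁ + 1) := by
              rw [← Real.rpow_add hR0]
              congr 1
              rw [he₁def]; ring
            rw [hRsplit, hc2def, ← hRadd]
            ring
    rw [hS2]
    exact hL2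
  ----------------------------------------------------------------
  -- Conclusion
  ----------------------------------------------------------------
  refine le_trans (add_le_add hterm1 hterm2) ?_
  have hXnn : 0 ≤ Φ (r / y.2) * (R ^ (q - α + β₂) / r ^ β₂) := by
    apply mul_nonneg hΦs₀.le
    exact div_nonneg (Real.rpow_nonneg hR0.le _) (Real.rpow_nonneg hr.le _)
  have hfin : K * cJ * (c1 * R ^ (e₁ + 1)) + K * cJ * (c2 * R ^ (e₁ + 1))
      = M2 * cJ * (c1 + c2) * (Φ (r / y.2) * (R ^ (q - α + β₂) / r ^ β₂)) := by
    rw [← hexp, hKdef, hrneg]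
    have hrb : r ^ β₂ ≠ 0 := (Real.rpow_pos_of_pos hr _).ne'
    field_simp
  rw [hfin]
  calc M2 * cJ * (c1 + c2) * (Φ (r / y.2) * (R ^ (q - α + β₂) / r ^ β₂))
      ≤ (M2 * cJ * (c1 + c2) + 1) * (Φ (r / y.2) * (R ^ (q - α + β₂) / r ^ β₂)) :=
        mul_le_mul_of_nonneg_right (le_add_of_nonneg_right zero_le_one) hXnn
    _ = (M2 * cJ * (c1 + c2) + 1) * Φ (r / y.2) * (R ^ (q - α + β₂) / r ^ β₂) := by
        ring
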